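/- Let k be a field of characteristic ≠ 2. A pair (x, y) ∈ k[t]² satisfies x² − (t² − 1)·y² = 1 if and only if there exist a natural number n and a sign ε ∈ {1, −1} such that, in the ring A = k[t][w]/(w² − (t² − 1)), one has x + y·w = ε·(t + w)ⁿ or x + y·w = ε·(t − w)ⁿ. (Equivalently, the solutions are exactly (±xₙ, ±yₙ) where xₙ = Σ_{i≥0} C(n,2i)·t^{n−2i}(t²−1)^i and yₙ = Σ_{i≥0} C(n,2i+1)·t^{n−2i−1}(t²−1)^i.) -/

import Mathlib

/-!
Writing `u = x + y·w`, the equation says that `u` has norm `u·ū = 1`, and `P = t + w` is a unit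
with inverse `t − w`. If `y ≠ 0` then `deg x = deg y + 1`. The first coordinates
`x·t ± (t² − 1)·y` of `u·P^{±1}` add up to `2·x·t`, of degree `deg x + 1` since `2 ≠ 0`, and
multiply to `x² + t² − 1`, of degree `2·deg x`; so one of them has degree `< deg x`.
Descending on `deg x` reaches `y = 0`, i.e. `u = ±1`, so `u = ±P^z` for some `z ∈ ℤ`.
-/

open Polynomial

/-- The ring `A = k[t][w]/(w² − (t² − 1))`. -/
noncomputable abbrev PellRing2 (k : Type*) [Field k] :=
  AdjoinRoot ((X : Polynomial (Polynomial k)) ^ 2 - C ((X : Polynomial k) ^ 2 - 1))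

/-- The element `a + b·w` of `A = k[t][w]/(w² − (t² − 1))`. -/
noncomputable def pellElem2 {k : Type*} [Field k] (a b : Polynomial k) :
    PellRing2 k :=
  AdjoinRoot.of _ a + AdjoinRoot.of _ b * AdjoinRoot.root _

section Degree

variable {R : Type*} [CommRing R] [IsDomain R] {x y : R[X]}

theorem natDegree_eq_succ_of_pell (hy : y ≠ 0) (h : x ^ 2 - (X ^ 2 - 1) * y ^ 2 = 1) :
    x.natDegree = y.natDegree + 1 := by
  have hD : (X ^ 2 - 1 : R[X]).natDegree = 2 := by
    simpa using natDegree_X_pow_sub_C (n := 2) (r := (1 : R))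
  have hD0 : (X ^ 2 - 1 : R[X]) ≠ 0 := ne_zero_of_natDegree_gt (hD ▸ two_pos)
  have hx2 : x ^ 2 = (X ^ 2 - 1) * y ^ 2 + C 1 := by rw [C_1]; linear_combination h
  have := congrArg natDegree hx2
  rw [natDegree_add_C, natDegree_mul hD0 (pow_ne_zero _ hy), natDegree_pow, natDegree_pow,
    hD] at this
  omega

theorem natDegree_mul_X_add_or_sub_lt (h2 : (2 : R) ≠ 0) (hy : y ≠ 0)
    (h : x ^ 2 - (X ^ 2 - 1) * y ^ 2 = 1) :
    (x * X + (X ^ 2 - 1) * y).natDegree < x.natDegree ∨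
      (x * X - (X ^ 2 - 1) * y).natDegree < x.natDegree := by
  set f := x * X + (X ^ 2 - 1) * y
  set g := x * X - (X ^ 2 - 1) * y
  have hdx := natDegree_eq_succ_of_pell hy h
  have hx0 : x ≠ 0 := ne_zero_of_natDegree_gt (n := 0) (by omega)
  by_cases hf0 : f = 0
  · left; rw [hf0, natDegree_zero]; omega
  by_cases hg0 : g = 0
  · right; rw [hg0, natDegree_zero]; omega
  have hsum : (f + g).natDegree = x.natDegree + 1 := by
    rw [show f + g = C 2 * (x * X) by simp only [f, g, C_ofNat]; ring,
      natDegree_C_mul h2, natDegree_mul_X hx0]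
  have hprod : (f * g).natDegree ≤ 2 * x.natDegree := by
    rw [show f * g = x ^ 2 + (X ^ 2 - C 1) by
      simp only [f, g, C_1]; linear_combination (X ^ 2 - 1) * h]
    refine (natDegree_add_le _ _).trans (max_le ?_ ?_)
    · rw [natDegree_pow]
    · rw [natDegree_X_pow_sub_C]; omega
  have hmax := hsum ▸ natDegree_add_le f g
  rw [natDegree_mul hf0 hg0] at hprod
  omega

end Degree

section PellRing

variable {k : Type*} [Field k]

theorem pellRing2_root_sq :
    (AdjoinRoot.root ((X : k[X][X]) ^ 2 - C ((X : k[X]) ^ 2 - 1))) ^ 2 =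
      AdjoinRoot.of _ ((X : k[X]) ^ 2 - 1) := by
  have := AdjoinRoot.eval₂_root ((X : k[X][X]) ^ 2 - C ((X : k[X]) ^ 2 - 1))
  rwa [eval₂_sub, eval₂_X_pow, eval₂_C, sub_eq_zero] at this

theorem pellElem2_mul (a b c d : k[X]) :
    pellElem2 a b * pellElem2 c d = pellElem2 (a * c + (X ^ 2 - 1) * (b * d)) (a * d + b * c) := by
  simp only [pellElem2, map_add, map_mul]
  linear_combination (AdjoinRoot.of _ b * AdjoinRoot.of _ d) * pellRing2_root_sq (k := k)

theorem pellElem2_inj {a b c d : k[X]} : pellElem2 a b = pellElem2 c d ↔ a = c ∧ b = d := by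
  refine ⟨fun h ↦ ?_, by rintro ⟨rfl, rfl⟩; rfl⟩
  have hmonic : ((X : k[X][X]) ^ 2 - C ((X : k[X]) ^ 2 - 1)).Monic :=
    monic_X_pow_sub_C _ two_ne_zero
  -- `a + b·w` is the class of the linear polynomial `b·X + a`, its own remainder.
  have hrepr (u v : k[X]) :
      AdjoinRoot.modByMonicHom hmonic (pellElem2 u v) = C v * X + C u := by
    have : pellElem2 u v = AdjoinRoot.mk _ (C v * X + C u) := by
      rw [map_add, map_mul, AdjoinRoot.mk_C, AdjoinRoot.mk_X, pellElem2, add_comm]; rfl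
    rw [this, AdjoinRoot.modByMonicHom_mk, (modByMonic_eq_self_iff hmonic).mpr]
    rw [degree_X_pow_sub_C two_pos]
    exact degree_linear_lt
  have hlin := congrArg (AdjoinRoot.modByMonicHom hmonic) h
  rw [hrepr, hrepr] at hlin
  exact ⟨by simpa using congrArg (coeff · 0) hlin, by simpa using congrArg (coeff · 1) hlin⟩

theorem pellElem2_one : pellElem2 (1 : k[X]) 0 = 1 := by
  simp [pellElem2]

theorem pellElem2_neg (a b : k[X]) : pellElem2 (-a) (-b) = -pellElem2 a b := by
  simp only [pellElem2, map_neg]; ring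

variable (k) in
def pellNormOne : Submonoid (PellRing2 k) where
  carrier := {u | ∃ a b : k[X], a ^ 2 - (X ^ 2 - 1) * b ^ 2 = 1 ∧ pellElem2 a b = u}
  one_mem' := ⟨1, 0, by ring, pellElem2_one⟩
  mul_mem' := by
    rintro _ _ ⟨a, b, hab, rfl⟩ ⟨c, d, hcd, rfl⟩
    exact ⟨_, _, by linear_combination (c ^ 2 - (X ^ 2 - 1) * d ^ 2) * hab + hcd,
      (pellElem2_mul a b c d).symm⟩

theorem pellElem2_mem_pellNormOne {a b : k[X]} :
    pellElem2 a b ∈ pellNormOne k ↔ a ^ 2 - (X ^ 2 - 1) * b ^ 2 = 1 := by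
  constructor
  · rintro ⟨c, d, hcd, hcd_eq⟩
    obtain ⟨rfl, rfl⟩ := pellElem2_inj.mp hcd_eq
    exact hcd
  · exact fun h ↦ ⟨a, b, h, rfl⟩

theorem neg_one_mem_pellNormOne : (-1 : PellRing2 k) ∈ pellNormOne k :=
  ⟨-1, -0, by ring, by rw [pellElem2_neg, pellElem2_one]⟩

theorem pellElem2_X_mem_pellNormOne {s : k[X]} (hs : s ^ 2 = 1) :
    pellElem2 X s ∈ pellNormOne k :=
  pellElem2_mem_pellNormOne.mpr (by rw [hs]; ring)

theorem pellElem2_X_one_mul_X_neg_one : pellElem2 (X : k[X]) 1 * pellElem2 X (-1) = 1 := by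
  rw [pellElem2_mul, ← pellElem2_one]
  congr 1 <;> ring

variable (k) in
noncomputable def pellUnit : (PellRing2 k)ˣ :=
  ⟨pellElem2 X 1, pellElem2 X (-1), pellElem2_X_one_mul_X_neg_one,
    (mul_comm _ _).trans pellElem2_X_one_mul_X_neg_one⟩

theorem val_pellUnit : (pellUnit k : PellRing2 k) = pellElem2 X 1 := rfl

theorem val_inv_pellUnit : ((pellUnit k)⁻¹ : (PellRing2 k)ˣ) = pellElem2 (X : k[X]) (-1) := rfl

theorem exists_val_pellUnit_zpow_eq (z : ℤ) :
    ∃ n : ℕ, ((pellUnit k ^ z : (PellRing2 k)ˣ) : PellRing2 k) = pellElem2 X 1 ^ n ∨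
      ((pellUnit k ^ z : (PellRing2 k)ˣ) : PellRing2 k) = pellElem2 X (-1) ^ n := by
  obtain ⟨n, rfl | rfl⟩ := Int.eq_nat_or_neg z
  · exact ⟨n, Or.inl (by rw [zpow_natCast, Units.val_pow_eq_pow_val, val_pellUnit])⟩
  · exact ⟨n, Or.inr (by
      rw [zpow_neg, zpow_natCast, ← inv_pow, Units.val_pow_eq_pow_val, val_inv_pellUnit])⟩

theorem exists_pell_descent (h2 : (2 : k) ≠ 0) {x y : k[X]} (hy : y ≠ 0)
    (h : x ^ 2 - (X ^ 2 - 1) * y ^ 2 = 1) :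
    ∃ x' y' : k[X], x' ^ 2 - (X ^ 2 - 1) * y' ^ 2 = 1 ∧ x'.natDegree < x.natDegree ∧
      ∃ s : ℤ, pellElem2 x y = pellElem2 x' y' * ↑(pellUnit k ^ s) := by
  have hu : pellElem2 x y ∈ pellNormOne k := pellElem2_mem_pellNormOne.mpr h
  have hP : pellElem2 x y * pellElem2 X 1 =
      pellElem2 (x * X + (X ^ 2 - 1) * y) (x + y * X) := by
    rw [pellElem2_mul]; congr 1 <;> ring
  have hQ : pellElem2 x y * pellElem2 X (-1) =
      pellElem2 (x * X - (X ^ 2 - 1) * y) (y * X - x) := by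
    rw [pellElem2_mul]; congr 1 <;> ring
  rcases natDegree_mul_X_add_or_sub_lt h2 hy h with hlt | hlt
  · refine ⟨_, x + y * X, ?_, hlt, -1, ?_⟩
    · rw [← pellElem2_mem_pellNormOne, ← hP]
      exact mul_mem hu (pellElem2_X_mem_pellNormOne (one_pow 2))
    · rw [← hP, zpow_neg_one, ← val_pellUnit, mul_assoc, Units.mul_inv, mul_one]
  · refine ⟨_, y * X - x, ?_, hlt, 1, ?_⟩
    · rw [← pellElem2_mem_pellNormOne, ← hQ]
      exact mul_mem hu (pellElem2_X_mem_pellNormOne (by ring))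
    · rw [← hQ, zpow_one, ← val_inv_pellUnit, mul_assoc, Units.inv_mul, mul_one]

theorem exists_eq_sign_mul_pellUnit_zpow (h2 : (2 : k) ≠ 0) {x y : k[X]}
    (h : x ^ 2 - (X ^ 2 - 1) * y ^ 2 = 1) :
    ∃ (z : ℤ) (ε : PellRing2 k), (ε = 1 ∨ ε = -1) ∧
      pellElem2 x y = ε * ↑(pellUnit k ^ z) := by
  induction hN : x.natDegree using Nat.strong_induction_on generalizing x y with
  | _ N ih =>
  by_cases hy : y = 0
  · subst hy
    refine ⟨0, pellElem2 x 0, ?_, by simp⟩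
    rcases sq_eq_one_iff.mp (by linear_combination h) with rfl | rfl
    · exact Or.inl pellElem2_one
    · exact Or.inr (by rw [← neg_zero, pellElem2_neg, pellElem2_one])
  · obtain ⟨x', y', h', hlt, s, hxy⟩ := exists_pell_descent h2 hy h
    obtain ⟨z, ε, hε, hz⟩ := ih _ (hN ▸ hlt) h' rfl
    exact ⟨z + s, ε, hε, by rw [hxy, hz, zpow_add, Units.val_mul, mul_assoc]⟩

end PellRing

/-- **All solutions of `x² − (t² − 1)y² = 1`.**  A pair `(x, y) ∈ k[t]²`
satisfies `x² − (t² − 1)·y² = 1` iff, in the ring `A = k[t][w]/(w² − (t² − 1))`,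
one has `x + y·w = ±(t + w)ⁿ` or `x + y·w = ±(t − w)ⁿ` for some `n : ℕ`. -/
theorem pell_solutions_of_t_sq_sub_one
    {k : Type*} [Field k] (h2 : (2 : k) ≠ 0) (x y : Polynomial k) :
    x ^ 2 - ((X : Polynomial k) ^ 2 - 1) * y ^ 2 = 1 ↔
    ∃ (n : ℕ) (ε : PellRing2 k), (ε = 1 ∨ ε = -1) ∧
      (pellElem2 x y = ε * (pellElem2 (X : Polynomial k) 1) ^ n ∨
       pellElem2 x y = ε * (pellElem2 (X : Polynomial k) (-1)) ^ n) := by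
  constructor
  · intro h
    obtain ⟨z, ε, hε, hz⟩ := exists_eq_sign_mul_pellUnit_zpow h2 h
    obtain ⟨n, hn | hn⟩ := exists_val_pellUnit_zpow_eq (k := k) z
    · exact ⟨n, ε, hε, Or.inl (hn ▸ hz)⟩
    · exact ⟨n, ε, hε, Or.inr (hn ▸ hz)⟩
  · rintro ⟨n, ε, hε, hxy | hxy⟩ <;> rw [← pellElem2_mem_pellNormOne, hxy]
    all_goals
      refine mul_mem ?_ (pow_mem (pellElem2_X_mem_pellNormOne (by ring)) n)
      rcases hε with rfl | rfl
      exacts [one_mem _, neg_one_mem_pellNormOne]
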